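/- Let n ∈ ℕ with n ≥ 2, let H ⊆ ℝ with |H| ≥ n+1, let ω = (ω₁, …, ω_n) : H → ℝⁿ be an n-dimensional positive Chebyshev system over H such that ω_{⟨n−1⟩} is an (n−1)-dimensional positive Chebyshev system over H, and let f : H → ℝ. Then for all pairwise distinct x₁, …, x_{n+1} ∈ H: Φ_{(ω,f)}(x₁, …, x_{n+1}) · Φ_{ω_{⟨n−1⟩}}(x₁, …, x_{n−1}) / (Φ_ω(x₁, …, x_{n−1}, x_n) · Φ_ω(x₁, …, x_{n−1}, x_{n+1})) = [x₁, …, x_{n−1}, x_{n+1}; f]_ω − [x₁, …, x_{n−1}, x_n; f]_ω. -/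

import Mathlib

/-- `Φ_ω(x₁,…,x_m) = det(ω_i(x_j))`. -/
noncomputable def Phi {m : ℕ} (ω : Fin m → ℝ → ℝ) (x : Fin m → ℝ) : ℝ :=
  Matrix.det (Matrix.of fun i j => ω i (x j))

/-- `ω` is an `m`-dimensional positive Chebyshev system over `H`. -/
def IsPosChebyshev {m : ℕ} (ω : Fin m → ℝ → ℝ) (H : Set ℝ) : Prop :=
  ∀ x : Fin m → ℝ, (∀ i, x i ∈ H) → StrictMono x → 0 < Phi ω x

/-- `f` is convex with respect to the `m`-dimensional system `ω` on `S`. -/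
def IsConvexWRT {m : ℕ} (ω : Fin m → ℝ → ℝ) (S : Set ℝ) (f : ℝ → ℝ) : Prop :=
  ∀ x : Fin (m + 1) → ℝ, (∀ i, x i ∈ S) → StrictMono x → 0 ≤ Phi (Fin.snoc ω f) x

/-- The generalized divided difference `[x₁,…,x_k; f]_{ω⟨k⟩}`:
the numerator replaces the last function `ω_k` by `f`. -/
noncomputable def divDiff {k : ℕ} (ω : Fin k → ℝ → ℝ) (f : ℝ → ℝ) (x : Fin k → ℝ) : ℝ :=
  Phi (fun i => if (i : ℕ) + 1 = k then f else ω i) x / Phi ω x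


/-! Multiplied out by its two denominators, the identity is the Desnanot–Jacobi (Sylvester)
identity for the matrix `(φ_i(x_j))`, `φ = (ω, f)`, taken with respect to its last two rows and
columns. Writing that matrix as a bordering of the invertible block
`A = (ω_i(x_j))_{i,j < n}`, each minor containing `A` is `det A` times the matching minor of the
`2 × 2` Schur complement of `A`, so the identity reduces to the expansion of a `2 × 2`
determinant. Positivity of the two Chebyshev systems makes `det A` and the denominators nonzero. -/

open Matrix

variable {k : ℕ}

section Tuple

variable {α : Type*}

lemma snoc_snoc_eq_append (p : Fin k → α) (a b : α) :
    Fin.snoc (Fin.snoc p a) b = Fin.append p ![a, b] := by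
  rw [Fin.snoc_eq_append p, ← Fin.append_snoc]
  congr 1
  ext i
  fin_cases i <;> rfl

lemma ite_eq_last_eq_snoc_init (p : Fin (k + 1) → α) (a : α) :
    (fun i : Fin (k + 1) => if (i : ℕ) + 1 = k + 1 then a else p i) =
      Fin.snoc (Fin.init p) a := by
  ext i
  refine Fin.lastCases ?_ (fun i => ?_) i <;> simp [Fin.init, i.isLt.ne]

lemma ite_lt_last_eq_snoc_init (p : Fin (k + 1) → α) (a : α) :
    (fun i : Fin (k + 1) => if (i : ℕ) + 1 < k + 1 then p i else a) =
      Fin.snoc (Fin.init p) a := by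
  ext i
  refine Fin.lastCases ?_ (fun i => ?_) i <;> simp [Fin.init]

lemma snoc_init_init_eq_comp_succAbove (x : Fin (k + 2) → α) :
    Fin.snoc (Fin.init (Fin.init x)) (x (Fin.last (k + 1))) =
      x ∘ (Fin.last k).castSucc.succAbove := by
  ext i
  refine Fin.lastCases ?_ (fun i => ?_) i <;> simp [Fin.init]

end Tuple

/-- The Schur complement of the block `(ω i (y j))` in its bordering by the row `u` and the
column `s` (junk when the block is singular). -/
noncomputable def schurEntry (ω : Fin k → ℝ → ℝ) (y : Fin k → ℝ) (u : ℝ → ℝ) (s : ℝ) : ℝ :=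
  u s - (fun j => u (y j)) ⬝ᵥ ((of fun i j => ω i (y j))⁻¹ *ᵥ fun i => ω i s)

lemma Phi_append {l : ℕ} (ω : Fin k → ℝ → ℝ) (ρ : Fin l → ℝ → ℝ) (y : Fin k → ℝ)
    (z : Fin l → ℝ) :
    Phi (Fin.append ω ρ) (Fin.append y z) =
      (fromBlocks (of fun i j => ω i (y j)) (of fun i j => ω i (z j))
        (of fun i j => ρ i (y j)) (of fun i j => ρ i (z j))).det := by
  rw [Phi, ← det_submatrix_equiv_self finSumFinEquiv]
  congr 1
  ext (i | i) (j | j) <;> simp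

lemma Phi_append_eq_mul_det_schurEntry {l : ℕ} {ω : Fin k → ℝ → ℝ} {y : Fin k → ℝ}
    (hA : Phi ω y ≠ 0) (ρ : Fin l → ℝ → ℝ) (z : Fin l → ℝ) :
    Phi (Fin.append ω ρ) (Fin.append y z) =
      Phi ω y * (of fun i j => schurEntry ω y (ρ i) (z j)).det := by
  have := invertibleOfIsUnitDet _ (isUnit_iff_ne_zero.mpr hA)
  rw [Phi_append, det_fromBlocks₁₁, invOf_eq_nonsing_inv]
  congr 2
  ext i j
  simp only [Matrix.sub_apply, of_apply, schurEntry, Matrix.mul_assoc, Matrix.mul_apply, mulVec,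
    dotProduct]

lemma Phi_snoc {ω : Fin k → ℝ → ℝ} {y : Fin k → ℝ} (hA : Phi ω y ≠ 0) (u : ℝ → ℝ) (s : ℝ) :
    Phi (Fin.snoc ω u) (Fin.snoc y s) = Phi ω y * schurEntry ω y u s := by
  rw [Fin.snoc_eq_append, Fin.snoc_eq_append, Phi_append_eq_mul_det_schurEntry hA, det_fin_one]
  rfl

lemma Phi_snoc_snoc {ω : Fin k → ℝ → ℝ} {y : Fin k → ℝ} (hA : Phi ω y ≠ 0) (u v : ℝ → ℝ)
    (s t : ℝ) :
    Phi (Fin.snoc (Fin.snoc ω u) v) (Fin.snoc (Fin.snoc y s) t) =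
      Phi ω y * (schurEntry ω y u s * schurEntry ω y v t -
        schurEntry ω y u t * schurEntry ω y v s) := by
  rw [snoc_snoc_eq_append, snoc_snoc_eq_append, Phi_append_eq_mul_det_schurEntry hA, det_fin_two]
  rfl

theorem Phi_snoc_snoc_mul_Phi {ω : Fin k → ℝ → ℝ} {y : Fin k → ℝ} (hA : Phi ω y ≠ 0)
    (u v : ℝ → ℝ) (s t : ℝ) :
    Phi (Fin.snoc (Fin.snoc ω u) v) (Fin.snoc (Fin.snoc y s) t) * Phi ω y =
      Phi (Fin.snoc ω u) (Fin.snoc y s) * Phi (Fin.snoc ω v) (Fin.snoc y t) -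
        Phi (Fin.snoc ω u) (Fin.snoc y t) * Phi (Fin.snoc ω v) (Fin.snoc y s) := by
  simp only [Phi_snoc_snoc hA, Phi_snoc hA]
  ring

lemma divDiff_eq (ω : Fin (k + 1) → ℝ → ℝ) (f : ℝ → ℝ) (x : Fin (k + 1) → ℝ) :
    divDiff ω f x = Phi (Fin.snoc (Fin.init ω) f) x / Phi ω x := by
  rw [divDiff, ite_eq_last_eq_snoc_init]

theorem divDiff_comp_succAbove_sub_divDiff_init (ω : Fin (k + 1) → ℝ → ℝ) (f : ℝ → ℝ)
    (x : Fin (k + 2) → ℝ) (hA : Phi (Fin.init ω) (Fin.init (Fin.init x)) ≠ 0)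
    (hB : Phi ω (Fin.init x) ≠ 0) (hC : Phi ω (x ∘ (Fin.last k).castSucc.succAbove) ≠ 0) :
    divDiff ω f (x ∘ (Fin.last k).castSucc.succAbove) - divDiff ω f (Fin.init x) =
      Phi (Fin.snoc ω f) x * Phi (Fin.init ω) (Fin.init (Fin.init x)) /
        (Phi ω (Fin.init x) * Phi ω (x ∘ (Fin.last k).castSucc.succAbove)) := by
  have key := Phi_snoc_snoc_mul_Phi hA (ω (Fin.last k)) f (Fin.init x (Fin.last k))
    (x (Fin.last (k + 1)))
  rw [Fin.snoc_init_self, Fin.snoc_init_self, Fin.snoc_init_self,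
    snoc_init_init_eq_comp_succAbove] at key
  rw [divDiff_eq, divDiff_eq, div_sub_div _ _ hC hB, key]
  ring

lemma Phi_comp_perm (ω : Fin k → ℝ → ℝ) (x : Fin k → ℝ) (σ : Equiv.Perm (Fin k)) :
    Phi ω (x ∘ σ) = Equiv.Perm.sign σ * Phi ω x :=
  det_permute' σ (of fun i j => ω i (x j))

lemma IsPosChebyshev.Phi_ne_zero {ω : Fin k → ℝ → ℝ} {H : Set ℝ} (hω : IsPosChebyshev ω H)
    {x : Fin k → ℝ} (hxH : ∀ i, x i ∈ H) (hx : Function.Injective x) : Phi ω x ≠ 0 := by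
  have hsorted : StrictMono (x ∘ Tuple.sort x) :=
    (Tuple.monotone_sort x).strictMono_of_injective (hx.comp (Tuple.sort x).injective)
  have hpos : 0 < Phi ω (x ∘ Tuple.sort x) := hω _ (fun i => hxH _) hsorted
  rw [Phi_comp_perm] at hpos
  exact right_ne_zero_of_mul hpos.ne'

/-- The identity \eqref{fid1} (Wąsowicz):
`Φ_{(ω,f)}(x₁,…,x_{n+1}) · Φ_{ω⟨n-1⟩}(x₁,…,x_{n-1}) /
  (Φ_ω(x₁,…,x_{n-1},x_n) · Φ_ω(x₁,…,x_{n-1},x_{n+1}))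
 = [x₁,…,x_{n-1},x_{n+1}; f]_ω - [x₁,…,x_{n-1},x_n; f]_ω`. -/
theorem wasowicz_identity (n : ℕ) (hn : 2 ≤ n) (H : Set ℝ)
    (ω : Fin n → ℝ → ℝ) (f : ℝ → ℝ)
    (hω : IsPosChebyshev ω H)
    (hω' : IsPosChebyshev (fun i : Fin (n - 1) => ω (Fin.castLE (by omega) i)) H)
    (x : Fin (n + 1) → ℝ) (hxH : ∀ i, x i ∈ H) (hinj : Function.Injective x) :
    Phi (Fin.snoc ω f) x *
        Phi (fun i : Fin (n - 1) => ω (Fin.castLE (by omega) i))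
          (fun i : Fin (n - 1) => x (Fin.castLE (by omega) i)) /
      (Phi ω (fun i : Fin n => if (i : ℕ) + 1 < n then x (Fin.castSucc i) else x ⟨n - 1, by omega⟩) *
        Phi ω (fun i : Fin n => if (i : ℕ) + 1 < n then x (Fin.castSucc i) else x (Fin.last n)))
    = divDiff ω f
         (fun i : Fin n => if (i : ℕ) + 1 < n then x (Fin.castSucc i) else x (Fin.last n))
      - divDiff ω f
         (fun i : Fin n => if (i : ℕ) + 1 < n then x (Fin.castSucc i) else x ⟨n - 1, by omega⟩) := by
  obtain ⟨k, rfl⟩ : ∃ k, n = k + 1 := ⟨n - 1, by omega⟩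
  have hinit : (fun i : Fin (k + 1) =>
      if (i : ℕ) + 1 < k + 1 then x i.castSucc else x ⟨k + 1 - 1, by omega⟩) = Fin.init x := by
    rw [ite_lt_last_eq_snoc_init]
    exact Fin.snoc_init_self (Fin.init x)
  have hskip : (fun i : Fin (k + 1) =>
      if (i : ℕ) + 1 < k + 1 then x i.castSucc else x (Fin.last (k + 1))) =
        x ∘ (Fin.last k).castSucc.succAbove := by
    rw [ite_lt_last_eq_snoc_init]
    exact snoc_init_init_eq_comp_succAbove x
  have hlower : Phi (fun i : Fin (k + 1 - 1) => ω (Fin.castLE (by omega) i))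
      (fun i => x (Fin.castLE (by omega) i)) = Phi (Fin.init ω) (Fin.init (Fin.init x)) := rfl
  rw [hlower, hinit, hskip]
  refine (divDiff_comp_succAbove_sub_divDiff_init ω f x ?_ ?_ ?_).symm
  · exact hω'.Phi_ne_zero (fun _ => hxH _)
      (hinj.comp ((Fin.castSucc_injective _).comp (Fin.castSucc_injective _)))
  · exact hω.Phi_ne_zero (fun _ => hxH _) (hinj.comp (Fin.castSucc_injective _))
  · exact hω.Phi_ne_zero (fun _ => hxH _) (hinj.comp Fin.succAbove_right_injective)
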